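/- Let ℙ be an algebraic number field of degree m over ℚ with ring of integers 𝒪, and let H ≤ SL(n,𝒪). If Tr([H,H]), the subring of 𝒪 generated by 1 and the traces of elements of the commutator subgroup [H,H], is a complete ℤ-submodule of 𝒪 (i.e., has ℤ-rank m), then the set of maximal ideals I of 𝒪 for which the reduction φ_I(H) is a subfield (C5-) group of SL(n,𝒪/I) is finite. -/

import Mathlib

open Matrix

set_option synthInstance.maxHeartbeats 400000
set_option maxHeartbeats 1000000

noncomputable section

/-- `G ≤ SL(n, F)` is a subfield (`C5`-) group: there is a proper subfield `E` of `F`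
and `x ∈ GL(n, F)` such that every element of `xGx⁻¹` is a scalar multiple of a matrix
with all entries in `E`. -/
def IsSubfieldGroup {n : ℕ} {F : Type*} [CommRing F]
    (G : Subgroup (Matrix.SpecialLinearGroup (Fin n) F)) : Prop :=
  ∃ E : Subring F, E ≠ ⊤ ∧ (∀ y ∈ E, ∀ z : F, y * z = 1 → z ∈ E) ∧
    ∃ x : (Matrix (Fin n) (Fin n) F)ˣ,
      ∀ g ∈ G, ∃ c : F, ∃ m : Matrix (Fin n) (Fin n) F,
        (∀ i j, m i j ∈ E) ∧
        (x : Matrix (Fin n) (Fin n) F) * (g : Matrix (Fin n) (Fin n) F) *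
          ((x⁻¹ : (Matrix (Fin n) (Fin n) F)ˣ) : Matrix (Fin n) (Fin n) F) = c • m

/-- `Tr(S)`: the subring of the coefficient ring generated by (1 and) the traces of the
elements of a matrix group `S`. -/
def trRing {n : ℕ} {A : Type*} [CommRing A]
    (S : Subgroup (Matrix.SpecialLinearGroup (Fin n) A)) : Subring A :=
  Subring.closure {t : A | ∃ g ∈ S, Matrix.trace ((g : Matrix (Fin n) (Fin n) A)) = t}

/-!
Modulo a maximal ideal `I` where `H` becomes a subfield group over a proper subfield `E`, each
element of `H` is conjugate to a scalar multiple of a matrix over `E`; the scalars cancel in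
commutators, so the traces of `[H, H]` reduce into `E`. A complete `Tr([H, H])` contains `N𝒪`
for a nonzero integer `N`. If `N ∉ I`, then `E` contains `N` together with its inverse and all of
`N · (𝒪/I)`, so `E = 𝒪/I`. Hence every such `I` contains `N`, and there are finitely many.
-/

namespace Subring

variable {F : Type*} [CommRing F] {n : Type*} [Fintype n] [DecidableEq n]
  (E : Subring F) {M : Matrix n n F}

theorem exists_map_subtype_eq_of_mem_matrix (hM : M ∈ E.matrix) :
    ∃ M' : Matrix n n E, E.subtype.mapMatrix M' = M :=
  ⟨of fun i j => ⟨M i j, hM i j⟩, rfl⟩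

theorem det_mem_of_mem_matrix (hM : M ∈ E.matrix) : M.det ∈ E := by
  obtain ⟨M', rfl⟩ := E.exists_map_subtype_eq_of_mem_matrix hM
  rw [← RingHom.map_det]
  exact M'.det.2

theorem adjugate_mem_matrix (hM : M ∈ E.matrix) : M.adjugate ∈ E.matrix := by
  obtain ⟨M', rfl⟩ := E.exists_map_subtype_eq_of_mem_matrix hM
  rw [← RingHom.map_adjugate]
  exact fun i j => (M'.adjugate i j).2

theorem trace_mem_of_mem_matrix (hM : M ∈ E.matrix) : M.trace ∈ E :=
  sum_mem fun i _ => hM i i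

theorem smul_mem_matrix {c : F} (hc : c ∈ E) (hM : M ∈ E.matrix) : c • M ∈ E.matrix :=
  fun i j => E.mul_mem hc (hM i j)

end Subring

namespace Matrix.SpecialLinearGroup

open scoped commutatorElement

variable {n : Type*} [Fintype n] [DecidableEq n] {F : Type*} [CommRing F]

theorem mem_range_map_subtype_iff {E : Subring F} {A : SpecialLinearGroup n F} :
    A ∈ (map E.subtype).range ↔ (A : Matrix n n F) ∈ E.matrix := by
  refine ⟨?_, fun hA => ?_⟩
  · rintro ⟨B, rfl⟩ i j
    exact (B i j).2
  · obtain ⟨B, hB⟩ := E.exists_map_subtype_eq_of_mem_matrix hA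
    have hdet : B.det = 1 := Subtype.val_injective <| by
      change E.subtype B.det = 1
      rw [RingHom.map_det, hB, A.prop]
    exact ⟨⟨B, hdet⟩, Subtype.ext hB⟩

def unitsConj (x : (Matrix n n F)ˣ) : SpecialLinearGroup n F →* SpecialLinearGroup n F where
  toFun A := ⟨x * A * (x⁻¹ : (Matrix n n F)ˣ), by rw [det_units_conj, A.prop]⟩
  map_one' := Subtype.ext <| by simp
  map_mul' A B := Subtype.ext <| by
    change (x : Matrix n n F) * (A * B) * _ = (x * A * _) * (x * B * _)
    simp [mul_assoc]

@[simp]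
theorem coe_unitsConj (x : (Matrix n n F)ˣ) (A : SpecialLinearGroup n F) :
    (unitsConj x A : Matrix n n F) = x * A * (x⁻¹ : (Matrix n n F)ˣ) :=
  rfl

theorem pow_card_mem_of_coe_eq_smul {E : Subring F} (hE : ∀ y ∈ E, ∀ z : F, y * z = 1 → z ∈ E)
    {A : SpecialLinearGroup n F} {c : F} {M : Matrix n n F} (hM : M ∈ E.matrix)
    (hA : (A : Matrix n n F) = c • M) : c ^ Fintype.card n ∈ E := by
  refine hE _ (E.det_mem_of_mem_matrix hM) _ ?_
  rw [mul_comm, ← det_smul, ← hA, A.prop]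

theorem commutator_mem_range_map_subtype {E : Subring F}
    (hE : ∀ y ∈ E, ∀ z : F, y * z = 1 → z ∈ E) {A B : SpecialLinearGroup n F} {c d : F}
    {M N : Matrix n n F} (hM : M ∈ E.matrix) (hN : N ∈ E.matrix)
    (hA : (A : Matrix n n F) = c • M) (hB : (B : Matrix n n F) = d • N) :
    ⁅A, B⁆ ∈ (map E.subtype).range := by
  rw [mem_range_map_subtype_iff]
  intro i
  obtain ⟨k, hk⟩ : ∃ k, Fintype.card n = k + 1 :=
    Nat.exists_eq_succ_of_ne_zero (Fintype.card_pos_iff.mpr ⟨i⟩).ne'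
  have hcomm : ((⁅A, B⁆ : SpecialLinearGroup n F) : Matrix n n F) =
      (c ^ Fintype.card n * d ^ Fintype.card n) • (M * N * M.adjugate * N.adjugate) := by
    rw [commutatorElement_def, coe_mul, coe_mul, coe_mul, coe_inv, coe_inv, hA, hB,
      adjugate_smul, adjugate_smul, hk, Nat.add_sub_cancel]
    simp only [smul_mul_assoc, mul_smul_comm, smul_smul]
    ring_nf
  rw [hcomm]
  exact E.smul_mem_matrix
    (E.mul_mem (pow_card_mem_of_coe_eq_smul hE hM hA) (pow_card_mem_of_coe_eq_smul hE hN hB))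
    (E.matrix.mul_mem (E.matrix.mul_mem (E.matrix.mul_mem hM hN) (E.adjugate_mem_matrix hM))
      (E.adjugate_mem_matrix hN)) i

end Matrix.SpecialLinearGroup

open scoped commutatorElement in
theorem IsSubfieldGroup.exists_trRing_commutator_le {n : ℕ} {F : Type*} [CommRing F]
    {G : Subgroup (SpecialLinearGroup (Fin n) F)} (hG : IsSubfieldGroup G) :
    ∃ E : Subring F, E ≠ ⊤ ∧ (∀ y ∈ E, ∀ z : F, y * z = 1 → z ∈ E) ∧ trRing ⁅G, G⁆ ≤ E := by
  obtain ⟨E, hE, hinv, x, hx⟩ := hG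
  refine ⟨E, hE, hinv, Subring.closure_le.mpr ?_⟩
  rintro _ ⟨g, hg, rfl⟩
  have hconj : ⁅G, G⁆ ≤ (SpecialLinearGroup.map E.subtype).range.comap
      (SpecialLinearGroup.unitsConj x) := by
    rw [Subgroup.commutator_le]
    intro g₁ hg₁ g₂ hg₂
    obtain ⟨c, M, hM, hc⟩ := hx g₁ hg₁
    obtain ⟨d, N, hN, hd⟩ := hx g₂ hg₂
    rw [Subgroup.mem_comap, map_commutatorElement]
    exact SpecialLinearGroup.commutator_mem_range_map_subtype hinv hM hN hc hd
  have hg' := SpecialLinearGroup.mem_range_map_subtype_iff.mp (hconj hg)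
  rw [SpecialLinearGroup.coe_unitsConj] at hg'
  rw [← trace_units_conj x]
  exact E.trace_mem_of_mem_matrix hg'

theorem trRing_map {n : ℕ} {A B : Type*} [CommRing A] [CommRing B] (f : A →+* B)
    (S : Subgroup (SpecialLinearGroup (Fin n) A)) :
    (trRing S).map f = trRing (S.map (SpecialLinearGroup.map f)) := by
  rw [trRing, trRing, RingHom.map_closure]
  congr 1
  ext t
  simp [AddMonoidHom.map_trace]

theorem Subring.eq_top_of_isUnit_of_forall_mul_mem {K : Type*} [Ring K] {E : Subring K}
    (hE : ∀ y ∈ E, ∀ z : K, y * z = 1 → z ∈ E) {u : K} (hu : IsUnit u) (hmul : ∀ z, u * z ∈ E) :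
    E = ⊤ := by
  have hinv : ↑hu.unit⁻¹ ∈ E := hE u (by simpa using hmul 1) _ hu.mul_val_inv
  refine (Subring.eq_top_iff' E).mpr fun z => ?_
  simpa [← mul_assoc] using E.mul_mem hinv (hmul z)

theorem Submodule.exists_smul_mem_of_finrank_eq {R M : Type*} [CommRing R] [IsDomain R]
    [AddCommGroup M] [Module R M] [Module.Finite R M] (N : Submodule R M)
    (h : Module.finrank R N = Module.finrank R M) : ∃ r : R, r ≠ 0 ∧ ∀ x, r • x ∈ N := by
  have hquot : Module.finrank R (M ⧸ N) = 0 := by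
    have := Module.finrank_quotient_add_finrank_le N
    omega
  have htors : Module.IsTorsion R (M ⧸ N) := fun x => by
    obtain ⟨a, ha, hax⟩ := Module.finrank_eq_zero_iff.mp hquot x
    exact ⟨⟨a, mem_nonZeroDivisors_of_ne_zero ha⟩, hax⟩
  obtain ⟨r, hr, hr0⟩ := Submodule.annihilator_top_inter_nonZeroDivisors htors
  refine ⟨r, nonZeroDivisors.ne_zero hr0, fun x => ?_⟩
  rw [← Submodule.Quotient.mk_eq_zero, Submodule.Quotient.mk_smul]
  exact Submodule.mem_annihilator.mp hr _ Submodule.mem_top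

/-- If `Tr([H,H])` is a complete `ℤ`-submodule of `𝒪` (of `ℤ`-rank `m = [ℙ:ℚ]`), then
the set of maximal ideals `I` of `𝒪` modulo which `H` reduces to a subfield (`C5`-)
group is finite. -/
theorem finite_subfieldGroup_primes_of_trRing_complete
    (P : Type*) [Field P] [NumberField P] (n : ℕ)
    (H : Subgroup (Matrix.SpecialLinearGroup (Fin n) ↥(integralClosure ℤ P)))
    (hcomplete : Module.finrank ℤ ↥(trRing ⁅H, H⁆) = Module.finrank ℚ P) :
    {I : Ideal ↥(integralClosure ℤ P) | I.IsMaximal ∧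
      IsSubfieldGroup
        (H.map (Matrix.SpecialLinearGroup.map (Ideal.Quotient.mk I)))}.Finite := by
  have : Module.Finite ℤ (integralClosure ℤ P) := IsIntegralClosure.finite ℤ ℚ P _
  obtain ⟨N, hN0, hN⟩ := (trRing ⁅H, H⁆).toAddSubgroup.toIntSubmodule.exists_smul_mem_of_finrank_eq
    (hcomplete.trans (IsIntegralClosure.rank ℤ ℚ P (integralClosure ℤ P)).symm)
  refine (Ring.HasFiniteQuotients.finite_setOfPred_mem (N : integralClosure ℤ P)
    (Int.cast_ne_zero.mpr hN0)).subset ?_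
  rintro I ⟨hI, hG⟩
  by_contra hNI
  obtain ⟨E, hE, hinv, hle⟩ := hG.exists_trRing_commutator_le
  rw [← Subgroup.map_commutator, ← trRing_map] at hle
  let := Ideal.Quotient.field I
  refine hE (Subring.eq_top_of_isUnit_of_forall_mul_mem hinv
    (isUnit_iff_ne_zero.mpr (Ideal.Quotient.eq_zero_iff_mem.not.mpr hNI)) fun z => ?_)
  obtain ⟨z, rfl⟩ := Ideal.Quotient.mk_surjective z
  exact hle ⟨N * z, by rw [← zsmul_eq_mul]; exact hN z, by simp⟩
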